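/- For \(k \geq 3\), \(r \geq 2\), and \(1 \leq j \leq r\), the numbers \(v_j^r = \frac{j}{r} \binom{(k-1)r - j - 1}{r-j}\) satisfy \(v_j^{r+1} = v_{j-1}^{r} + \sum_{m=j-1}^{r-1} \binom{m - j + k - 1}{k-3} v_{m+1}^{r}\) for \(j \geq 2\), and \(v_1^{r+1} = \sum_{m=0}^{r-1} \binom{m+k-2}{k-3} v_{m+1}^{r}\), where \(v_0^r = 0\). -/

import Mathlib

/-- Binomial coefficient with integer arguments, defined to be 0 when the
lower index is negative or exceeds the upper index. -/
def binomZ (a b : ℤ) : ℚ :=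
  if 0 ≤ b ∧ b ≤ a then (a.toNat.choose b.toNat : ℚ) else 0

/-- The number of k-angulations with r k-gons whose root vertex has degree
`j - 1`: `v_j^r = (j/r) C((k-1)r - j - 1, r - j)`. -/
def vAng (k r j : ℕ) : ℚ :=
  (j : ℚ) / r * binomZ (((k : ℤ) - 1) * r - j - 1) ((r : ℤ) - j)

/-!
Write `k = K + 3`, `r = J + s + 1`, `j = J + 1`. For `t + n = r - J` the closed form is
`v_{J+t}^r = (J + t) / r · C(c + n, n)` with `c = (K + 1)(r - 1) + K`, so the production-matrix
recurrence becomes a sum over `t + n = s + 1` of `(J + t) C(K + t, t) C(c + n, n)`. Its `J`-part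
and its `t`-part are upper-index Vandermonde convolutions, i.e. Chu–Vandermonde in `ℤ` at the
negative arguments `-(K + 1)` and `-(c + 1)`; the weight `t` is absorbed by
`t C(K + t, t) = (K + 1) C(K + t, t - 1)`.
-/

open Finset

lemma Ring.choose_neg_natCast_succ (a i : ℕ) :
    Ring.choose (-((a : ℤ) + 1)) i = (-1) ^ i * (a + i).choose i := by
  rw [Ring.choose_neg, show (a : ℤ) + 1 + i - 1 = ((a + i : ℕ) : ℤ) by push_cast; ring,
    Ring.choose_natCast, Int.negOnePow_def, Units.smul_def]
  rfl

theorem Nat.sum_antidiagonal_add_choose_mul_add_choose (a b N : ℕ) :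
    ∑ ij ∈ antidiagonal N, (a + ij.1).choose ij.1 * (b + ij.2).choose ij.2
      = (a + b + N + 1).choose N := by
  have h := Ring.add_choose_eq (r := -((a : ℤ) + 1)) (s := -((b : ℤ) + 1)) N (Commute.all _ _)
  rw [show -((a : ℤ) + 1) + -((b : ℤ) + 1) = -(((a + b + 1 : ℕ) : ℤ) + 1) by
    push_cast; ring] at h
  simp only [Ring.choose_neg_natCast_succ] at h
  have hsign : ∀ ij ∈ antidiagonal N, (-1) ^ ij.1 * ((a + ij.1).choose ij.1 : ℤ) *
      ((-1) ^ ij.2 * ((b + ij.2).choose ij.2 : ℤ)) =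
      (-1) ^ N * (((a + ij.1).choose ij.1 * (b + ij.2).choose ij.2 : ℕ) : ℤ) := by
    intro ij hij
    rw [← mem_antidiagonal.mp hij, pow_add]
    push_cast; ring
  rw [sum_congr rfl hsign, ← mul_sum, show a + b + 1 + N = a + b + N + 1 by ring] at h
  exact_mod_cast (mul_right_injective₀ (pow_ne_zero N (neg_ne_zero.mpr one_ne_zero)) h).symm

theorem Nat.sum_antidiagonal_mul_add_choose_mul_add_choose (a b N : ℕ) :
    ∑ ij ∈ antidiagonal (N + 1), ij.1 * ((a + ij.1).choose ij.1 * (b + ij.2).choose ij.2)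
      = (a + 1) * (a + b + N + 2).choose N := by
  have hshift (i : ℕ) :
      (i + 1) * (a + (i + 1)).choose (i + 1) = (a + 1) * (a + 1 + i).choose i := by
    have := Nat.choose_succ_right_eq (a + i + 1) i
    rw [show a + i + 1 - i = a + 1 by omega] at this
    rw [show a + (i + 1) = a + i + 1 by ring, show a + 1 + i = a + i + 1 by ring]
    linarith
  rw [Nat.sum_antidiagonal_succ, zero_mul, zero_add]
  simp only [← mul_assoc, hshift]
  simp only [mul_assoc, ← mul_sum]
  rw [Nat.sum_antidiagonal_add_choose_mul_add_choose,
    show a + 1 + b + N + 1 = a + b + N + 2 by ring]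

lemma binomZ_natCast (a b : ℕ) : binomZ a b = a.choose b := by
  rcases le_or_gt b a with h | h
  · simp [binomZ, h]
  · simp [binomZ, Nat.choose_eq_zero_of_lt h]

lemma vAng_zero (k r : ℕ) : vAng k r 0 = 0 := by simp [vAng]

lemma vAng_eq_choose (K m j n : ℕ) (h : j + n = m + 1) :
    vAng (K + 3) (m + 1) j = j / (m + 1) * ((K + 1) * m + K + n).choose n := by
  have hupper :
      ((K + 3 : ℕ) - 1 : ℤ) * (m + 1 : ℕ) - j - 1 = ((K + 1) * m + K + n : ℕ) := by
    have h' : (j : ℤ) + n = m + 1 := by exact_mod_cast h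
    push_cast
    linear_combination -h'
  have hlower : ((m + 1 : ℕ) : ℤ) - j = (n : ℕ) := by omega
  rw [vAng, hupper, hlower, binomZ_natCast]
  push_cast
  ring

theorem vAng_succ_eq_sum_antidiagonal (K J s : ℕ) :
    vAng (K + 3) (J + s + 2) (J + 1) =
      ∑ ij ∈ antidiagonal (s + 1),
        ((K + ij.1).choose ij.1 : ℚ) * vAng (K + 3) (J + s + 1) (J + ij.1) := by
  set c := (K + 1) * (J + s) + K
  set T := (K + 1) * (J + s) + 2 * K + s + 2
  have hT : (K + 1) * (J + s + 1) + K + (s + 1) = T := by ring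
  have hsum :
      ∑ ij ∈ antidiagonal (s + 1), ((K + ij.1).choose ij.1 * (c + ij.2).choose ij.2 : ℚ)
      = T.choose (s + 1) := by
    have := Nat.sum_antidiagonal_add_choose_mul_add_choose K c (s + 1)
    rw [show K + c + (s + 1) + 1 = T by ring] at this
    exact_mod_cast this
  have hsum_weighted : ∑ ij ∈ antidiagonal (s + 1),
      (ij.1 * ((K + ij.1).choose ij.1 * (c + ij.2).choose ij.2) : ℚ) = (K + 1) * T.choose s := by
    have := Nat.sum_antidiagonal_mul_add_choose_mul_add_choose K c s
    rw [show K + c + s + 2 = T by ring] at this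
    exact_mod_cast this
  have hchoose_succ :
      (T.choose (s + 1) : ℚ) * (s + 1) = T.choose s * ((K + 1) * (J + s + 2)) := by
    have := Nat.choose_succ_right_eq T s
    have hTs : T = (K + 1) * (J + s + 2) + s := by ring
    rw [show T - s = (K + 1) * (J + s + 2) by rw [hTs, Nat.add_sub_cancel]] at this
    exact_mod_cast this
  calc vAng (K + 3) (J + s + 2) (J + 1)
      = (J + 1) / (J + s + 2) * T.choose (s + 1) := by
        rw [vAng_eq_choose K (J + s + 1) (J + 1) (s + 1) (by ring), hT]
        push_cast; ring
    _ = (J * T.choose (s + 1) + (K + 1) * T.choose s) / (J + s + 1) := by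
        field_simp
        linear_combination hchoose_succ
    _ = ∑ ij ∈ antidiagonal (s + 1), (J * ((K + ij.1).choose ij.1 * (c + ij.2).choose ij.2)
          + ij.1 * ((K + ij.1).choose ij.1 * (c + ij.2).choose ij.2) : ℚ) / (J + s + 1) := by
        rw [← sum_div, sum_add_distrib, ← mul_sum, hsum, hsum_weighted]
    _ = _ := by
        refine sum_congr rfl fun ij hij => ?_
        rw [vAng_eq_choose K (J + s) (J + ij.1) ij.2 (by linarith [mem_antidiagonal.mp hij])]
        push_cast; ring

theorem vAng_succ_eq_add_sum {k r j : ℕ} (hk : 3 ≤ k) (hj : 1 ≤ j) (hjr : j ≤ r) :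
    vAng k (r + 1) j = vAng k r (j - 1) +
      ∑ m ∈ Icc (j - 1) (r - 1),
        binomZ ((m : ℤ) - j + k - 1) ((k : ℤ) - 3) * vAng k r (m + 1) := by
  obtain ⟨K, rfl⟩ : ∃ K, k = K + 3 := ⟨k - 3, by omega⟩
  obtain ⟨J, rfl⟩ : ∃ J, j = J + 1 := ⟨j - 1, by omega⟩
  obtain ⟨s, rfl⟩ : ∃ s, r = J + s + 1 := ⟨r - (J + 1), by omega⟩
  have hbinom (i : ℕ) :
      binomZ (((J + i : ℕ) : ℤ) - (J + 1 : ℕ) + (K + 3 : ℕ) - 1) ((K + 3 : ℕ) - 3)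
        = (K + (i + 1)).choose (i + 1) := by
    rw [show ((J + i : ℕ) : ℤ) - (J + 1 : ℕ) + (K + 3 : ℕ) - 1 = (K + (i + 1) : ℕ) by
        push_cast; ring,
      show ((K + 3 : ℕ) : ℤ) - 3 = (K : ℕ) by push_cast; ring, binomZ_natCast,
      Nat.choose_symm_add]
  rw [show J + s + 1 + 1 = J + s + 2 by ring, vAng_succ_eq_sum_antidiagonal,
    Nat.sum_antidiagonal_eq_sum_range_succ_mk, sum_range_succ', ← Ico_add_one_right_eq_Icc,
    sum_Ico_eq_sum_range, show J + s + 1 - 1 + 1 - (J + 1 - 1) = s + 1 by omega]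
  simp only [Nat.add_sub_cancel, hbinom, add_assoc, Nat.add_zero, Nat.choose_zero_right]
  push_cast
  ring

/-- For `k ≥ 3`, `r ≥ 2` and `1 ≤ j ≤ r`, the closed-form counts satisfy
`v_j^{r+1} = v_{j-1}^r + ∑_{m=j-1}^{r-1} C(m-j+k-1, k-3) v_{m+1}^r` for `j ≥ 2`
and `v_1^{r+1} = ∑_{m=0}^{r-1} C(m+k-2, k-3) v_{m+1}^r`, where `v_0^r = 0`. -/
theorem stmt14 (k r : ℕ) (hk : 3 ≤ k) (hr : 2 ≤ r) :
    (∀ j, 2 ≤ j → j ≤ r →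
      vAng k (r + 1) j =
        vAng k r (j - 1) +
          ∑ m ∈ Finset.Icc (j - 1) (r - 1),
            binomZ ((m : ℤ) - j + k - 1) ((k : ℤ) - 3) * vAng k r (m + 1)) ∧
    vAng k (r + 1) 1 =
      ∑ m ∈ Finset.range r, binomZ ((m : ℤ) + k - 2) ((k : ℤ) - 3) * vAng k r (m + 1) ∧
    vAng k r 0 = 0 := by
  refine ⟨fun j hj hjr => vAng_succ_eq_add_sum hk (by omega) hjr, ?_, vAng_zero k r⟩
  rw [vAng_succ_eq_add_sum hk le_rfl (by omega), Nat.sub_self, vAng_zero, zero_add,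
    ← Ico_add_one_right_eq_Icc, Nat.sub_add_cancel (by omega), ← range_eq_Ico]
  refine sum_congr rfl fun m _ => ?_
  congr 2
  push_cast
  ring
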